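/- arXiv:2308.07205 — 6 statements merged into one kernel-verified Lean document; each statement's English description precedes it below -/
import Mathlib

section
/- For any nonnegative integers N and r with r even, (-1)^N ≤ ∑_{k=0}^{r} (-2)^k * C(N,k), where C(N,k) denotes the binomial coefficient (which vanishes for k > N). -/
open Finset

lemma bonf_rec (N r : ℕ) :
    ∑ k ∈ range (r + 1), (-2 : ℤ) ^ k * ((N + 1).choose k) =
      -∑ k ∈ range (r + 1), (-2 : ℤ) ^ k * (N.choose k)
        + 2 * (-2 : ℤ) ^ r * (N.choose r) := by
  induction r with
  | zero => simp
  | succ r ih =>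
    rw [sum_range_succ, ih, sum_range_succ (n := r + 1), Nat.choose_succ_succ]
    push_cast
    ring

lemma bonf_both (N r : ℕ) (hr : Even r) :
    ((-1 : ℤ) ^ N) ≤ ∑ k ∈ range (r + 1), (-2 : ℤ) ^ k * (N.choose k) ∧
    ∑ k ∈ range (r + 1), (-2 : ℤ) ^ k * (N.choose k)
      ≤ ((-1 : ℤ) ^ N) + 2 * 2 ^ r * (N.choose r) := by
  have hneg : ((-2 : ℤ)) ^ r = 2 ^ r := hr.neg_pow 2
  induction N with
  | zero =>
    have hz : ∑ k ∈ range (r + 1), (-2 : ℤ) ^ k * ((0:ℕ).choose k) = 1 := by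
      rw [Finset.sum_range_succ']; simp
    have hpos : (0:ℤ) ≤ 2 * 2 ^ r * ((0:ℕ).choose r) := by positivity
    rw [hz]
    constructor
    · simp
    · simp only [pow_zero]; linarith
  | succ N ih =>
    obtain ⟨h1, h2⟩ := ih
    rw [bonf_rec, hneg]
    have hch : (N.choose r : ℤ) ≤ ((N+1).choose r : ℤ) := by
      exact_mod_cast Nat.choose_le_choose r (Nat.le_succ N)
    have hmul : 2 * (2:ℤ) ^ r * (N.choose r) ≤ 2 * 2 ^ r * ((N+1).choose r) := by
      have h0 : (0:ℤ) ≤ 2 * 2 ^ r := by positivity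
      exact mul_le_mul_of_nonneg_left hch h0
    have hpow : (-1:ℤ)^(N+1) = -(-1)^N := by ring
    rw [hpow]
    constructor
    · linarith
    · linarith

theorem bonferroni_even (N r : ℕ) (hr : Even r) :
    ((-1 : ℤ) ^ N) ≤ ∑ k ∈ Finset.range (r + 1), (-2 : ℤ) ^ k * (N.choose k) := by
  exact (bonf_both N r hr).1
end

section
/- For any nonnegative integers N and r with r odd, (-1)^N ≥ ∑_{k=0}^{r} (-2)^k * C(N,k). -/
/-!
Let `S_r(N) = ∑_{k ≤ r} (-x)^k C(N,k)` be the truncations of `(1 - x)^N`. Pascal's rule gives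
`S_{r+1}(N+1) = (1 - x) S_r(N) + (-x)^{r+1} C(N,r+1)`, so the signed error
`E_r(N) = (-1)^r ((1 - x)^N - S_r(N))` satisfies `E_{r+1}(N+1) = (x - 1) E_r(N) - x^{r+1} C(N,r+1)`.
For `1 ≤ x ≤ 2` induction on `N` gives `E_r(N) ≤ 0`, the base cases being `E_r(0) = 0` and
`E_0(N) = (1 - x)^N - 1 ≤ 0` because `|1 - x| ≤ 1`. The theorem is the case `x = 2`, `r` odd.
-/

open Finset

variable {R : Type*}

theorem sum_range_succ_succ_neg_pow_mul_choose_succ [CommRing R] (x : R) (N r : ℕ) :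
    ∑ k ∈ range (r + 2), (-x) ^ k * ((N + 1).choose k : R) =
      (1 - x) * ∑ k ∈ range (r + 1), (-x) ^ k * (N.choose k : R)
        + (-x) ^ (r + 1) * (N.choose (r + 1) : R) := by
  induction r with
  | zero =>
    simp only [zero_add, sum_range_succ, sum_range_zero, Nat.choose_zero_right,
      Nat.choose_one_right]
    push_cast
    ring
  | succ r ih =>
    rw [sum_range_succ, ih, sum_range_succ (n := r + 1), Nat.choose_succ_succ N (r + 1)]
    push_cast
    ring

theorem neg_one_pow_mul_one_sub_pow_sub_sum_nonpos
    [CommRing R] [LinearOrder R] [IsStrictOrderedRing R] {x : R} (hx₁ : 1 ≤ x) (hx₂ : x ≤ 2)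
    (N r : ℕ) :
    (-1) ^ r * ((1 - x) ^ N - ∑ k ∈ range (r + 1), (-x) ^ k * (N.choose k : R)) ≤ 0 := by
  induction N generalizing r with
  | zero =>
    rw [sum_range_succ', sum_eq_zero fun k _ => by simp]
    simp
  | succ N ih =>
    cases r with
    | zero =>
      have : (1 - x) ^ (N + 1) ≤ 1 :=
        (le_abs_self _).trans <| (abs_pow _ _).le.trans <|
          pow_le_one₀ (abs_nonneg _) (abs_sub_le_iff.2 ⟨by linarith, by linarith⟩)
      simpa using this
    | succ r =>
      rw [sum_range_succ_succ_neg_pow_mul_choose_succ]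
      set S := ∑ k ∈ range (r + 1), (-x) ^ k * (N.choose k : R)
      have hsign : (-1 : R) ^ (2 * r) = 1 := by simp [pow_mul]
      have hstep : (-1) ^ (r + 1) *
            ((1 - x) ^ (N + 1) - ((1 - x) * S + (-x) ^ (r + 1) * N.choose (r + 1))) =
          (x - 1) * ((-1) ^ r * ((1 - x) ^ N - S)) - x ^ (r + 1) * N.choose (r + 1) := by
        rw [neg_pow x]
        linear_combination (-x ^ (r + 1) * N.choose (r + 1)) * hsign
      have hprev : (x - 1) * ((-1) ^ r * ((1 - x) ^ N - S)) ≤ 0 :=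
        mul_nonpos_of_nonneg_of_nonpos (sub_nonneg.2 hx₁) (ih r)
      have hterm : 0 ≤ x ^ (r + 1) * (N.choose (r + 1) : R) := by
        have : (0 : R) ≤ x := by linarith
        positivity
      rw [hstep]
      linarith

theorem bonferroni_odd (N r : ℕ) (hr : Odd r) :
    ∑ k ∈ Finset.range (r + 1), (-2 : ℤ) ^ k * (N.choose k) ≤ ((-1 : ℤ) ^ N) := by
  have h := neg_one_pow_mul_one_sub_pow_sub_sum_nonpos (x := (2 : ℤ)) one_le_two le_rfl N r
  rw [hr.neg_one_pow, show (1 - 2 : ℤ) = -1 by norm_num] at h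
  linarith
end

section
/- For any complex number z and any nonnegative integers N and r, |z^N - ∑_{k=0}^{r} (z-1)^k * C(N,k)| ≤ |z-1|^{r+1} * C(N, r+1) * max(1, |z|)^N. In particular, when |z| = 1 one has z^N = ∑_{k=0}^{r} (z-1)^k C(N,k) + O(2^{r+1} C(N,r+1)). -/
lemma trunc_sum_succ (z : ℂ) (N : ℕ) : ∀ r : ℕ,
    ∑ k ∈ Finset.range (r + 1), (z - 1) ^ k * ((N + 1).choose k) =
      z * ∑ k ∈ Finset.range (r + 1), (z - 1) ^ k * (N.choose k)
        - (z - 1) ^ (r + 1) * (N.choose r) := by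
  intro r
  induction r with
  | zero => simp
  | succ r ih =>
      rw [Finset.sum_range_succ]
      nth_rewrite 2 [Finset.sum_range_succ]
      rw [ih, Nat.choose_succ_succ]
      push_cast
      ring

theorem truncated_binomial_complex (z : ℂ) (N r : ℕ) :
    ‖z ^ N - ∑ k ∈ Finset.range (r + 1), (z - 1) ^ k * (N.choose k)‖ ≤
      ‖z - 1‖ ^ (r + 1) * (N.choose (r + 1)) * (max 1 ‖z‖) ^ N := by
  induction N with
  | zero =>
      have hs : ∑ k ∈ Finset.range (r + 1), (z - 1) ^ k * ((0:ℕ).choose k) = 1 := by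
        rw [Finset.sum_range_succ']
        simp
      rw [hs]
      simp [Nat.choose_eq_zero_of_lt (Nat.succ_pos r)]
  | succ N ih =>
      have key : z ^ (N + 1) - ∑ k ∈ Finset.range (r + 1), (z - 1) ^ k * ((N + 1).choose k)
          = z * (z ^ N - ∑ k ∈ Finset.range (r + 1), (z - 1) ^ k * (N.choose k))
            + (z - 1) ^ (r + 1) * (N.choose r) := by
        rw [trunc_sum_succ]
        ring
      rw [key]
      set M := max 1 ‖z‖ with hM
      have hM1 : (1:ℝ) ≤ M := le_max_left _ _
      have hzM : ‖z‖ ≤ M := le_max_right _ _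
      have hMN : (1:ℝ) ≤ M ^ N := one_le_pow₀ hM1
      have ha : (0:ℝ) ≤ ‖z - 1‖ ^ (r + 1) := by positivity
      calc ‖z * (z ^ N - ∑ k ∈ Finset.range (r + 1), (z - 1) ^ k * (N.choose k))
              + (z - 1) ^ (r + 1) * (N.choose r)‖
          ≤ ‖z‖ * ‖z ^ N - ∑ k ∈ Finset.range (r + 1),
              (z - 1) ^ k * (N.choose k)‖ + ‖z - 1‖ ^ (r + 1) * (N.choose r) := by
            refine le_trans (norm_add_le _ _) ?_
            rw [norm_mul, norm_mul, norm_pow]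
            simp [Complex.norm_natCast]
        _ ≤ M * (‖z - 1‖ ^ (r + 1) * (N.choose (r + 1)) * M ^ N)
              + ‖z - 1‖ ^ (r + 1) * (N.choose r) := by
            gcongr
        _ ≤ ‖z - 1‖ ^ (r + 1) * ((N + 1).choose (r + 1)) * M ^ (N + 1) := by
            rw [Nat.choose_succ_succ' N r]
            push_cast
            have h1 : ‖z - 1‖ ^ (r + 1) * (N.choose r)
                ≤ ‖z - 1‖ ^ (r + 1) * (N.choose r) * M ^ (N + 1) := by
              nlinarith [one_le_pow₀ hM1 (n := N + 1),
                mul_nonneg ha (Nat.cast_nonneg (N.choose r) : (0:ℝ) ≤ N.choose r)]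
            have h2 : M * (‖z - 1‖ ^ (r + 1) * (N.choose (r + 1)) * M ^ N)
                = ‖z - 1‖ ^ (r + 1) * (N.choose (r + 1)) * M ^ (N + 1) := by
              ring
            nlinarith [h1, h2]
end

section
/- The series ∑_{n=10}^∞ (log log n) * (p_{n+1} - p_n) / (n * (log n)^3) converges, where p_n denotes the n-th prime. -/
/-!
Chebyshev's lower bound for the prime counting function gives `p_n ≤ 8 n log n` for `n ≥ 10`.
The weight `w n = log (log n) / (n (log n)³)` is eventually decreasing, so summation by parts
lets one replace the prime gaps `p_{n+1} - p_n` by the increments of the majorant `8 n log n`,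
which are `O(log n)`. The resulting series is dominated by `∑ 1 / (n (log n)^(3/2))`, which
converges by Cauchy condensation.
-/

open Finset Filter Real

theorem sum_range_mul_sub_le_of_antitone {a h : ℕ → ℝ} (ha : Antitone a) (hh : 0 ≤ h)
    (N : ℕ) :
    ∑ n ∈ range N, a n * (h n - h (n + 1)) ≤ a 0 * h 0 - a N * h N := by
  induction N with
  | zero => simp
  | succ N ih =>
    rw [sum_range_succ]
    nlinarith [mul_le_mul_of_nonneg_right (ha N.le_succ) (hh (N + 1))]

theorem summable_mul_sub_of_le {a g G : ℕ → ℝ} (ha : Antitone a) (ha₀ : 0 ≤ a)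
    (hg : Monotone g) (hG : Monotone G) (hgG : g ≤ G)
    (hs : Summable fun n ↦ a n * (G (n + 1) - G n)) :
    Summable fun n ↦ a n * (g (n + 1) - g n) := by
  -- Split `g = G - (G - g)`; summation by parts on `G - g ≥ 0` only produces terms of good sign.
  refine summable_of_sum_range_le (c := ∑' n, a n * (G (n + 1) - G n) + a 0 * (G 0 - g 0))
    (fun n ↦ mul_nonneg (ha₀ n) (sub_nonneg.2 (hg n.le_succ))) fun N ↦ ?_
  have hG_sum :=
    hs.sum_le_tsum (range N) fun n _ ↦ mul_nonneg (ha₀ n) (sub_nonneg.2 (hG n.le_succ))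
  have h_gap := sum_range_mul_sub_le_of_antitone ha (sub_nonneg.2 hgG) N
  have h_last : 0 ≤ a N * (G N - g N) := mul_nonneg (ha₀ N) (sub_nonneg.2 (hgG N))
  have h_split : ∑ n ∈ range N, a n * (g (n + 1) - g n) =
      ∑ n ∈ range N, a n * (G (n + 1) - G n) +
        ∑ n ∈ range N, a n * ((G - g) n - (G - g) (n + 1)) := by
    rw [← sum_add_distrib]
    exact sum_congr rfl fun n _ ↦ by simp only [Pi.sub_apply]; ring
  simp only [Pi.sub_apply] at h_gap h_split
  linarith

theorem summable_mul_sub_of_eventually_le {a g G : ℕ → ℝ}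
    (ha : ∀ᶠ n in atTop, a (n + 1) ≤ a n) (ha₀ : ∀ᶠ n in atTop, 0 ≤ a n)
    (hg : ∀ᶠ n in atTop, g n ≤ g (n + 1)) (hG : ∀ᶠ n in atTop, G n ≤ G (n + 1))
    (hgG : ∀ᶠ n in atTop, g n ≤ G n) (hs : Summable fun n ↦ a n * (G (n + 1) - G n)) :
    Summable fun n ↦ a n * (g (n + 1) - g n) := by
  obtain ⟨N, hN⟩ := eventually_atTop.1 ((((ha.and ha₀).and hg).and hG).and hgG)
  have hN' (n : ℕ) := hN (n + N) (Nat.le_add_left N n)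
  simp only [add_right_comm _ N 1] at hN'
  rw [← summable_nat_add_iff N] at hs ⊢
  have := summable_mul_sub_of_le (a := fun n ↦ a (n + N)) (g := fun n ↦ g (n + N))
    (G := fun n ↦ G (n + N)) (antitone_nat_of_succ_le fun n ↦ (hN' n).1.1.1.1)
    (fun n ↦ (hN' n).1.1.1.2) (monotone_nat_of_le_succ fun n ↦ (hN' n).1.1.2)
    (monotone_nat_of_le_succ fun n ↦ (hN' n).1.2) (fun n ↦ (hN' n).2)
  simp only [add_right_comm _ 1 N] at this
  exact this hs

theorem summable_one_div_nat_mul_log_rpow {s : ℝ} (hs : 1 < s) :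
    Summable fun n : ℕ ↦ 1 / (n * log n ^ s) := by
  rw [← summable_condensed_iff_of_eventually_nonneg]
  · refine ((summable_one_div_nat_rpow.2 hs).mul_left (log 2 ^ s)⁻¹).congr fun k ↦ ?_
    push_cast
    rw [Real.log_pow, Real.mul_rpow (Nat.cast_nonneg k) (log_nonneg one_le_two)]
    field_simp
  · exact Eventually.of_forall fun n ↦
      one_div_nonneg.2 (mul_nonneg n.cast_nonneg (rpow_nonneg (log_natCast_nonneg n) s))
  · filter_upwards [eventually_ge_atTop 2] with n hn
    have hn' : (2 : ℝ) ≤ n := by exact_mod_cast hn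
    have hlog : 0 < log n := log_pos (by linarith)
    gcongr <;> simp

open scoped Nat.Prime in
theorem lt_primeCounting_floor_mul_log {k : ℕ} (hk : 10 ≤ k) :
    k < π ⌊8 * (k * log k)⌋₊ := by
  have hk' : (10 : ℝ) ≤ k := by exact_mod_cast hk
  set L := log k with hL
  have hL2 : 2 < L := by
    rw [hL, lt_log_iff_exp_lt (by linarith)]
    have := exp_one_lt_d9
    calc exp 2 = exp 1 ^ 2 := by rw [← exp_nat_mul]; norm_num
      _ < 3 ^ 2 := by gcongr; linarith
      _ < k := by linarith
  set x := 8 * (k * L) with hx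
  have hLk : L ≤ k := (log_le_sub_one_of_pos (by linarith)).trans (by linarith)
  have hx_le : x ≤ 8 * k ^ 2 := by nlinarith
  have hx1 : 1 < x := by nlinarith
  have hlog_x : log x ≤ 3 * L := by
    have : log 8 < L := log_lt_log (by norm_num) (by linarith)
    calc log x ≤ log (8 * k ^ 2) := log_le_log (by linarith) hx_le
      _ = log 8 + 2 * L := by rw [log_mul (by norm_num) (by positivity), log_pow]; push_cast; ring
      _ ≤ 3 * L := by linarith
  have hlog_x2 : log (x + 2) ≤ 3 * L := by
    calc log (x + 2) ≤ log (k ^ 3) := log_le_log (by linarith) (by nlinarith)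
      _ = 3 * L := by rw [log_pow]; push_cast; ring
  have hlog2 := log_two_gt_d9
  suffices (k : ℝ) < ((x - 1) * log 2 - log (x + 2)) / log x by
    exact_mod_cast this.trans_le (Chebyshev.pi_ge' hx1)
  rw [lt_div_iff₀ (log_pos hx1)]
  nlinarith [mul_le_mul_of_nonneg_left hlog_x (by linarith : (0 : ℝ) ≤ k)]

theorem nth_prime_le_mul_log {k : ℕ} (hk : 10 ≤ k) :
    (Nat.nth Nat.Prime k : ℝ) ≤ 8 * (k * log k) := by
  have h := Nat.nth_lt_of_lt_count (lt_primeCounting_floor_mul_log hk)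
  exact (Nat.cast_le.2 (Nat.lt_succ_iff.1 h)).trans (Nat.floor_le (by positivity))

noncomputable def logLogWeight (n : ℕ) : ℝ := log (log n) / (n * log n ^ 3)

theorem eventually_exp_one_le_log : ∀ᶠ n : ℕ in atTop, exp 1 ≤ log n :=
  (tendsto_log_atTop.comp tendsto_natCast_atTop_atTop).eventually_ge_atTop _

theorem eventually_logLogWeight_nonneg : ∀ᶠ n in atTop, 0 ≤ logLogWeight n := by
  filter_upwards [eventually_exp_one_le_log] with n hn
  have : 1 ≤ log n := (one_le_exp zero_le_one).trans hn
  exact div_nonneg (log_nonneg this) (by positivity)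

theorem eventually_logLogWeight_succ_le :
    ∀ᶠ n in atTop, logLogWeight (n + 1) ≤ logLogWeight n := by
  filter_upwards [eventually_exp_one_le_log, eventually_ge_atTop 1] with n hn hn1
  have hn1' : (1 : ℝ) ≤ n := by exact_mod_cast hn1
  have hlog_pos : 0 < log n := (exp_pos 1).trans_le hn
  have hlog_le : log n ≤ log (n + 1 : ℕ) := log_le_log (by positivity) (by push_cast; linarith)
  have hweight (m : ℕ) (hm : 0 < log m) :
      logLogWeight m = (log (log m) / log m) / (m * log m ^ 2) := by
    unfold logLogWeight; field_simp
  rw [hweight n hlog_pos, hweight (n + 1) (hlog_pos.trans_le hlog_le)]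
  have hlog_log : 0 ≤ log (log n) / log n :=
    div_nonneg (log_nonneg ((one_le_exp zero_le_one).trans hn)) hlog_pos.le
  apply div_le_div₀ hlog_log (log_div_self_antitoneOn hn (hn.trans hlog_le) hlog_le)
    (by positivity)
  gcongr
  simp

theorem mul_log_add_one_sub_mul_log_le {x : ℝ} (hx : 0 < x) :
    (x + 1) * log (x + 1) - x * log x ≤ log (x + 1) + 1 := by
  have h := log_le_sub_one_of_pos (div_pos (by linarith : 0 < x + 1) hx)
  rw [log_div (by linarith) hx.ne', add_div, div_self hx.ne'] at h
  have : x * (log (x + 1) - log x) ≤ 1 := by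
    calc x * (log (x + 1) - log x) ≤ x * (1 / x) := by gcongr; linarith
      _ = 1 := mul_one_div_cancel hx.ne'
  linarith

theorem natCast_mul_log_monotone : Monotone fun n : ℕ ↦ (n : ℝ) * log n := by
  intro m n hmn
  rcases m.eq_zero_or_pos with rfl | hm
  · simp only [CharP.cast_eq_zero, zero_mul]
    positivity
  · dsimp only
    gcongr

theorem summable_logLogWeight_mul_sub :
    Summable fun n : ℕ ↦ logLogWeight n * ((n + 1) * log (n + 1) - n * log n) := by
  refine ((summable_one_div_nat_mul_log_rpow (by norm_num : (1 : ℝ) < 3 / 2)).mul_left 6)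
    |>.of_norm_bounded_eventually_nat ?_
  filter_upwards [eventually_exp_one_le_log, eventually_ge_atTop 2] with n hn hn2
  have hn2' : (2 : ℝ) ≤ n := by exact_mod_cast hn2
  have hlog : 1 ≤ log n := (one_le_exp zero_le_one).trans hn
  have hlog_succ : log (n + 1) ≤ 2 * log n := by
    calc log (n + 1) ≤ log ((n : ℝ) ^ 2) := log_le_log (by positivity) (by nlinarith)
      _ = 2 * log n := by rw [log_pow]; norm_num
  have hgap_nonneg : 0 ≤ (n + 1) * log (n + 1) - n * log n :=
    sub_nonneg.2 (by exact_mod_cast natCast_mul_log_monotone n.le_succ)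
  have hgap : (n + 1) * log (n + 1) - n * log n ≤ 3 * log n := by
    linarith [mul_log_add_one_sub_mul_log_le (by positivity : (0 : ℝ) < n)]
  have hlog_log : log (log n) ≤ 2 * log n ^ (1 / 2 : ℝ) := by
    have := log_le_rpow_div (by positivity : 0 ≤ log n) (by norm_num : (0 : ℝ) < 1 / 2)
    linarith
  have hrpow : log n ^ (3 / 2 : ℝ) * log n ^ (1 / 2 : ℝ) = log n ^ 2 := by
    rw [← rpow_add (by positivity)]; norm_num
  have hweight : 0 ≤ logLogWeight n := div_nonneg (log_nonneg hlog) (by positivity)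
  rw [Real.norm_of_nonneg (mul_nonneg hweight hgap_nonneg)]
  calc logLogWeight n * ((n + 1) * log (n + 1) - n * log n)
      ≤ log (log n) / (n * log n ^ 3) * (3 * log n) := by unfold logLogWeight; gcongr
    _ ≤ 2 * log n ^ (1 / 2 : ℝ) / (n * log n ^ 3) * (3 * log n) := by gcongr
    _ = 6 * (1 / (n * log n ^ (3 / 2 : ℝ))) := by
      field_simp
      rw [← hrpow]; ring

theorem loglog_gap_series_converges (p : ℕ → ℕ)
    (hp : ∀ n, p (n + 1) = Nat.nth Nat.Prime n) :
    Summable (fun n : ℕ => if 10 ≤ n then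
      Real.log (Real.log n) * ((p (n + 1) : ℝ) - (p n : ℝ)) / (n * (Real.log n) ^ 3)
      else 0) := by
  have hnth_mono : Monotone (Nat.nth Nat.Prime) := Nat.nth_monotone Nat.infinite_setOfPred_prime
  have hp_le_nth (n : ℕ) (hn : 1 ≤ n) : p n ≤ Nat.nth Nat.Prime n := by
    obtain ⟨m, rfl⟩ := Nat.exists_eq_add_of_le' hn
    exact (hp m).trans_le (hnth_mono m.le_succ)
  have hp_mono : ∀ᶠ n in atTop, (p n : ℝ) ≤ p (n + 1) := by
    filter_upwards [eventually_ge_atTop 1] with n hn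
    exact_mod_cast (hp n).symm ▸ hp_le_nth n hn
  have hp_le : ∀ᶠ n : ℕ in atTop, (p n : ℝ) ≤ 8 * (n * log n) := by
    filter_upwards [eventually_ge_atTop 10] with n hn
    exact (Nat.cast_le.2 (hp_le_nth n (by omega))).trans (nth_prime_le_mul_log hn)
  have hG_mono :
      ∀ᶠ n : ℕ in atTop, 8 * (n * log n) ≤ 8 * ((n + 1 : ℕ) * log (n + 1 : ℕ)) :=
    Eventually.of_forall fun n ↦
      mul_le_mul_of_nonneg_left (natCast_mul_log_monotone n.le_succ) (by norm_num)
  have hG_sum : Summable fun n : ℕ ↦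
      logLogWeight n * (8 * ((n + 1 : ℕ) * log (n + 1 : ℕ)) - 8 * (n * log n)) :=
    (summable_logLogWeight_mul_sub.mul_left 8).congr fun n ↦ by push_cast; ring
  refine (summable_mul_sub_of_eventually_le eventually_logLogWeight_succ_le
    eventually_logLogWeight_nonneg hp_mono hG_mono hp_le hG_sum).congr_atTop ?_
  filter_upwards [eventually_ge_atTop 10] with n hn
  rw [if_pos hn, logLogWeight]
  ring
end

section
/- Suppose ∑_{n=10}^∞ |∑_{p_n ≤ m < p_{n+1}} 1/(m log m) − n(p_{n+1}−p_n)/(p_n p_{n+1})| < ∞ and ∑_{n=1}^∞ (-1)^n / p_{n+1} converges. Then the series ∑_{n=1}^∞ (-1)^n n / p_n converges if and only if the series ∑_{m=2}^∞ (-1)^{π(m)} / (m log m) converges, where π is the prime counting function. -/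
open Filter Finset Nat


/-- Partial sums of prime reciprocals tend to infinity. -/
lemma aux_sum_primesBelow_tendsto :
    Tendsto (fun M : ℕ => ∑ p ∈ M.primesBelow, (1 : ℝ) / p) atTop atTop := by
  have h := not_summable_one_div_on_primes
  have hnn : ∀ n : ℕ, 0 ≤ Set.indicator {p | Nat.Prime p} (fun n : ℕ => (1 : ℝ) / n) n := by
    intro n
    apply Set.indicator_nonneg
    intro x _
    positivity
  have := (not_summable_iff_tendsto_nat_atTop_of_nonneg hnn).mp h
  convert this using 2 with M
  rw [Finset.sum_indicator_eq_sum_filter]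
  rfl

/-- Products of (1 - 1/p) over primes below M can be made arbitrarily small. -/
lemma aux_prod_small {ε : ℝ} (hε : 0 < ε) :
    ∃ M : ℕ, ∏ p ∈ M.primesBelow, (1 - 1 / (p : ℝ)) < ε := by
  obtain ⟨M, hM⟩ := (Filter.tendsto_atTop.mp aux_sum_primesBelow_tendsto (Real.log (1/ε) + 1)).exists
  refine ⟨M, ?_⟩
  have h1 : ∏ p ∈ M.primesBelow, (1 - 1 / (p : ℝ)) ≤
      ∏ p ∈ M.primesBelow, Real.exp (-(1 / (p : ℝ))) := by
    apply Finset.prod_le_prod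
    · intro p hpp
      have hp2 : 2 ≤ p := (Nat.prime_of_mem_primesBelow hpp).two_le
      have hp1 : (1:ℝ) ≤ (p:ℝ) := by exact_mod_cast le_trans (by norm_num) hp2
      have : (1:ℝ)/p ≤ 1 := by rw [div_le_one] <;> linarith
      linarith
    · intro p _
      have := Real.add_one_le_exp (-(1 / (p : ℝ)))
      linarith
  rw [← Real.exp_sum] at h1
  calc ∏ p ∈ M.primesBelow, (1 - 1 / (p : ℝ)) ≤ _ := h1
    _ < ε := by
      rw [← Real.exp_log hε]
      apply Real.exp_lt_exp.mpr
      have : Real.log (1/ε) = - Real.log ε := by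
        rw [one_div, Real.log_inv]
      rw [Finset.sum_neg_distrib]
      nlinarith [hM]

lemma aux_totient_prod (M : ℕ) :
    ((∏ p ∈ M.primesBelow, p).totient : ℝ) =
      ((∏ p ∈ M.primesBelow, p : ℕ) : ℝ) * ∏ p ∈ M.primesBelow, (1 - 1/(p:ℝ)) := by
  have h := Nat.totient_eq_mul_prod_factors (∏ p ∈ M.primesBelow, p)
  rw [Nat.primeFactors_prod (fun p hp => Nat.prime_of_mem_primesBelow hp)] at h
  have h2 := congrArg (fun q : ℚ => (q : ℝ)) h
  push_cast at h2 ⊢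
  simpa [one_div] using h2

lemma aux_pi_bound {ε : ℝ} (hε : 0 < ε) :
    ∃ C : ℝ, ∀ N : ℕ, (Nat.primeCounting' N : ℝ) ≤ C + ε * N := by
  obtain ⟨M, hM⟩ := aux_prod_small hε
  set a : ℕ := ∏ p ∈ M.primesBelow, p with ha
  have hapos : 0 < a := Finset.prod_pos fun p hp => (Nat.prime_of_mem_primesBelow hp).pos
  have hφ : (a.totient : ℝ) ≤ ε * a := by
    have h := aux_totient_prod M
    rw [← ha] at h
    rw [h]
    have hprodnn : (0:ℝ) ≤ ∏ p ∈ M.primesBelow, (1 - 1/(p:ℝ)) := by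
      apply Finset.prod_nonneg
      intro p hp
      have hp1 : (1:ℝ) ≤ (p:ℝ) := by
        exact_mod_cast le_trans (by norm_num) (Nat.prime_of_mem_primesBelow hp).two_le
      have : (1:ℝ)/p ≤ 1 := by rw [div_le_one] <;> linarith
      linarith
    have hacast : (0:ℝ) < (a:ℝ) := by exact_mod_cast hapos
    calc (a:ℝ) * ∏ p ∈ M.primesBelow, (1 - 1/(p:ℝ)) ≤ (a:ℝ) * ε := by
          apply mul_le_mul_of_nonneg_left (le_of_lt hM) (le_of_lt hacast)
      _ = ε * a := mul_comm _ _
  refine ⟨(Nat.primeCounting' (a+1) : ℝ) + ε * a + ε * a, fun N => ?_⟩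
  rcases le_or_gt N (a+1) with hN | hN
  · have h1 : (Nat.primeCounting' N : ℝ) ≤ (Nat.primeCounting' (a+1) : ℝ) := by
      exact_mod_cast Nat.monotone_primeCounting' hN
    have h2 : (0:ℝ) ≤ ε * N := by positivity
    have h3 : (0:ℝ) ≤ ε * a := by positivity
    linarith
  · set n : ℕ := N - (a+1) with hn
    have hNeq : N = (a+1) + n := by omega
    have hb := Nat.primeCounting'_add_le hapos.ne' (lt_add_one a) n
    rw [← hNeq] at hb
    have hbR : (Nat.primeCounting' N : ℝ) ≤ (Nat.primeCounting' (a+1) : ℝ)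
        + (a.totient : ℝ) * (((n/a : ℕ) : ℝ) + 1) := by exact_mod_cast hb
    have hdiv : ((n/a : ℕ) : ℝ) ≤ (n:ℝ) / (a:ℝ) := Nat.cast_div_le
    have hacast : (0:ℝ) < (a:ℝ) := by exact_mod_cast hapos
    have htnn : (0:ℝ) ≤ (a.totient : ℝ) := by positivity
    have h4 : (a.totient : ℝ) * (((n/a : ℕ) : ℝ) + 1) ≤ ε * a * ((n:ℝ)/(a:ℝ) + 1) := by
      apply mul_le_mul hφ (by linarith) (by positivity) (by positivity)
    have h5 : ε * a * ((n:ℝ)/(a:ℝ) + 1) = ε * n + ε * a := by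
      field_simp
    have h6 : (n:ℝ) ≤ (N:ℝ) := by exact_mod_cast Nat.sub_le N (a+1)
    have h7 : ε * n ≤ ε * N := by nlinarith
    linarith

lemma aux_tendsto_div_nth :
    Filter.Tendsto (fun n : ℕ => (n:ℝ) / (Nat.nth Nat.Prime n : ℝ)) atTop (nhds 0) := by
  rw [Metric.tendsto_atTop]
  intro ε hε
  obtain ⟨C₀, hC₀⟩ := aux_pi_bound (show (0:ℝ) < ε/4 by linarith)
  set C : ℝ := max C₀ 1 with hC
  have hCpos : (0:ℝ) < C := lt_of_lt_of_le one_pos (le_max_right _ _)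
  have hCb : ∀ N : ℕ, (Nat.primeCounting' N : ℝ) ≤ C + ε/4 * N := fun N =>
    le_trans (hC₀ N) (by have := le_max_left C₀ 1; linarith)
  refine ⟨⌈4*C/ε⌉₊, fun n hn => ?_⟩
  have hle : ∀ m : ℕ, m ≤ Nat.nth Nat.Prime m := fun m =>
    Nat.le_nth (fun hf => (Nat.infinite_setOf_prime hf).elim)
  set P : ℝ := (Nat.nth Nat.Prime n : ℝ) with hPdef
  have hP1 : (4*C/ε : ℝ) ≤ P := by
    calc (4*C/ε : ℝ) ≤ (⌈4*C/ε⌉₊ : ℝ) := Nat.le_ceil _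
      _ ≤ (n : ℝ) := by exact_mod_cast hn
      _ ≤ P := by rw [hPdef]; exact_mod_cast hle n
  have hPpos : (0:ℝ) < P := lt_of_lt_of_le (by positivity) hP1
  have hcount : (n : ℝ) ≤ C + ε/4 * P := by
    have := hCb (Nat.nth Nat.Prime n)
    rwa [Nat.primeCounting'_nth_eq] at this
  have h4C : 4*C ≤ P * ε := (div_le_iff₀ hε).mp hP1
  rw [Real.dist_eq, sub_zero, abs_of_nonneg (by positivity)]
  rw [div_lt_iff₀ hPpos]
  nlinarith

theorem erdos_question_equivalence (p : ℕ → ℕ)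
    (hp : ∀ n, p (n + 1) = Nat.nth Nat.Prime n)
    (h1 : Summable (fun n : ℕ => if 10 ≤ n then
      |(∑ m ∈ Finset.Ico (p n) (p (n + 1)), 1 / ((m : ℝ) * Real.log m)) -
        (n : ℝ) * ((p (n + 1) : ℝ) - (p n : ℝ)) / ((p n : ℝ) * (p (n + 1) : ℝ))|
      else 0))
    (h2 : ∃ L : ℝ, Filter.Tendsto
      (fun N : ℕ => ∑ n ∈ Finset.Icc 1 N, (-1 : ℝ) ^ n / (p (n + 1) : ℝ))
      Filter.atTop (nhds L)) :
    (∃ L : ℝ, Filter.Tendsto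
      (fun N : ℕ => ∑ n ∈ Finset.Icc 1 N, (-1 : ℝ) ^ n * n / (p n : ℝ))
      Filter.atTop (nhds L)) ↔
    (∃ L : ℝ, Filter.Tendsto
      (fun N : ℕ => ∑ m ∈ Finset.Icc 2 N, (-1 : ℝ) ^ (Nat.primeCounting m) / ((m : ℝ) * Real.log m))
      Filter.atTop (nhds L)) := by
  -- basic facts about p
  have hp2 : ∀ n, 2 ≤ p (n + 1) := fun n => by
    rw [hp]; exact (Nat.prime_nth_prime n).two_le
  have hmono : ∀ n, p (n + 1) < p (n + 2) := fun n => by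
    have : p (n + 2) = Nat.nth Nat.Prime (n + 1) := hp (n + 1)
    rw [hp, this]
    exact (Nat.nth_lt_nth Nat.infinite_setOf_prime).mpr (lt_add_one n)
  have hpR : ∀ n, (0:ℝ) < (p (n+1) : ℝ) := fun n => by
    exact_mod_cast lt_of_lt_of_le (by norm_num) (hp2 n)
  -- π on blocks
  have hpi : ∀ n m : ℕ, p (n+1) ≤ m → m < p (n+2) → Nat.primeCounting m = n + 1 := by
    intro n m hm1 hm2
    show Nat.count Nat.Prime (m+1) = n + 1
    apply le_antisymm
    · have h2' : m < p (n+1+1) := hm2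
      exact (Nat.count_le_iff_le_nth Nat.infinite_setOf_prime).mpr (by rw [← hp]; omega)
    · exact (Nat.lt_nth_iff_count_lt Nat.infinite_setOf_prime).mpr (by rw [← hp]; omega)
  -- definitions
  set s : ℕ → ℝ := fun n => ∑ m ∈ Finset.Ico (p n) (p (n + 1)), 1 / ((m : ℝ) * Real.log m)
    with hs_def
  set t : ℕ → ℝ := fun n =>
      (n : ℝ) * ((p (n + 1) : ℝ) - (p n : ℝ)) / ((p n : ℝ) * (p (n + 1) : ℝ)) with ht_def
  set A : ℕ → ℝ := fun N => ∑ n ∈ Finset.Icc 1 N, (-1 : ℝ) ^ n * n / (p n : ℝ) with hA_def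
  set E : ℕ → ℝ := fun N => ∑ n ∈ Finset.Icc 1 N, (-1 : ℝ) ^ n / (p (n + 1) : ℝ) with hE_def
  set B : ℕ → ℝ := fun N =>
      ∑ m ∈ Finset.Icc 2 N, (-1 : ℝ) ^ (Nat.primeCounting m) / ((m : ℝ) * Real.log m) with hB_def
  set C : ℕ → ℝ := fun N => ∑ n ∈ Finset.Icc 1 N, (-1 : ℝ) ^ n * s n with hC_def
  set D : ℕ → ℝ := fun N => ∑ n ∈ Finset.Icc 1 N, (-1 : ℝ) ^ n * t n with hD_def
  -- nonnegativity of block terms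
  have hterm_nn : ∀ m : ℕ, (0:ℝ) ≤ 1 / ((m : ℝ) * Real.log m) := by
    intro m
    apply one_div_nonneg.mpr
    apply mul_nonneg (Nat.cast_nonneg m)
    rcases Nat.eq_zero_or_pos m with rfl | hm
    · simp
    · exact Real.log_nonneg (by exact_mod_cast hm)
  have hs_nn : ∀ n : ℕ, 0 ≤ s n :=
    fun n => Finset.sum_nonneg fun m _ => hterm_nn m
  -- Step I : C - D converges
  have stepI : ∃ K : ℝ, Filter.Tendsto (fun N => C N - D N) atTop (nhds K) := by
    set g : ℕ → ℝ := fun n => (-1 : ℝ) ^ n * (s n - t n) with hg_def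
    have hgsum : Summable g := by
      have h1'' : Summable (fun n : ℕ => if 10 ≤ n then |s n - t n| else 0) := by
        apply h1.congr
        intro n
        simp only [hs_def, ht_def]
      rw [← summable_nat_add_iff (f := g) 10]
      apply Summable.of_abs
      have h1' : Summable (fun n : ℕ => if 10 ≤ n + 10 then |s (n + 10) - t (n + 10)| else 0) :=
        (summable_nat_add_iff (f := fun n : ℕ => if 10 ≤ n then |s n - t n| else 0) 10).mpr h1''
      apply h1'.congr
      intro n
      rw [if_pos (by omega)]
      rw [hg_def]
      simp [abs_mul, abs_pow]
    obtain ⟨K, hKsum⟩ := hgsum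
    refine ⟨K - g 0, ?_⟩
    have h3 : Filter.Tendsto (fun N : ℕ => ∑ n ∈ Finset.range (N + 1), g n) atTop (nhds K) :=
      hKsum.tendsto_sum_nat.comp (tendsto_add_atTop_nat 1)
    have h4 : ∀ N : ℕ, ∑ n ∈ Finset.range (N + 1), g n = g 0 + ∑ n ∈ Finset.Icc 1 N, g n := by
      intro N
      rw [Finset.range_eq_Ico, ← Finset.sum_Ico_consecutive g (Nat.zero_le 1) (by omega),
        Finset.Ico_add_one_right_eq_Icc]
      simp [Finset.Ico_add_one_right_eq_Icc]
    have h5 : ∀ N : ℕ, C N - D N = ∑ n ∈ Finset.Icc 1 N, g n := by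
      intro N
      rw [hC_def, hD_def, ← Finset.sum_sub_distrib]
      apply Finset.sum_congr rfl
      intro n _
      rw [hg_def]
      ring
    have := h3.sub_const (g 0)
    apply this.congr
    intro N
    rw [h5, h4]
    ring
  -- Step II : D N = A N + A (N+1) + 1/(p 1) + E N
  have stepII : ∀ N : ℕ, D N = A N + A (N + 1) + 1 / (p 1 : ℝ) + E N := by
    intro N
    induction N with
    | zero =>
      simp only [hD_def, hA_def, hE_def]
      rw [show Finset.Icc 1 0 = (∅ : Finset ℕ) from Finset.Icc_eq_empty (by omega)]
      rw [Finset.Icc_self, Finset.sum_singleton, Finset.sum_empty]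
      norm_num
      ring
    | succ N ih =>
      have e1 : D (N + 1) = D N + (-1 : ℝ) ^ (N+1) * t (N+1) := by
        simp only [hD_def]
        exact Finset.sum_Icc_succ_top (a := 1) (b := N) (by omega) _
      have e2 : A (N + 1) = A N + (-1 : ℝ) ^ (N+1) * (N+1) / (p (N+1) : ℝ) := by
        simp only [hA_def]
        exact_mod_cast Finset.sum_Icc_succ_top (a := 1) (b := N) (by omega)
          (fun n => (-1 : ℝ) ^ n * n / (p n : ℝ))
      have e3 : A (N + 2) = A (N + 1) + (-1 : ℝ) ^ (N+2) * (N+2) / (p (N+2) : ℝ) := by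
        simp only [hA_def]
        exact_mod_cast Finset.sum_Icc_succ_top (a := 1) (b := N+1) (by omega)
          (fun n => (-1 : ℝ) ^ n * n / (p n : ℝ))
      have e4 : E (N + 1) = E N + (-1 : ℝ) ^ (N+1) / (p (N+2) : ℝ) := by
        simp only [hE_def]
        exact_mod_cast Finset.sum_Icc_succ_top (a := 1) (b := N) (by omega)
          (fun n => (-1 : ℝ) ^ n / (p (n+1) : ℝ))
      have ht1 : (p (N+1) : ℝ) ≠ 0 := ne_of_gt (hpR N)
      have ht2 : (p (N+2) : ℝ) ≠ 0 := ne_of_gt (hpR (N+1))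
      have key : (-1 : ℝ) ^ (N+1) * t (N+1) =
          (-1 : ℝ) ^ (N+1) * (N+1) / (p (N+1) : ℝ)
          + (-1 : ℝ) ^ (N+2) * (N+2) / (p (N+2) : ℝ)
          + (-1 : ℝ) ^ (N+1) / (p (N+2) : ℝ) := by
        rw [ht_def]
        simp only []
        rw [show ((N:ℕ)+1+1 : ℕ) = N+2 from rfl]
        push_cast
        rw [show ((-1 : ℝ) ^ (N+2)) = (-1) * (-1)^(N+1) by rw [pow_succ]; ring]
        field_simp
        ring
      rw [e1, e3, e4, ih, key, e2]
      ring
  -- Step III : partial sums of B at block boundaries equal C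
  have stepIII : ∀ N : ℕ,
      (∑ m ∈ Finset.Ico 2 (p (N + 1)),
        (-1 : ℝ) ^ (Nat.primeCounting m) / ((m : ℝ) * Real.log m)) = C N := by
    intro N
    induction N with
    | zero =>
      have hp1 : p 1 = 2 := by rw [hp]; exact Nat.nth_prime_zero_eq_two
      simp [hp1, hC_def]
    | succ N ih =>
      have hle1 : 2 ≤ p (N + 1) := hp2 N
      have hle2 : p (N + 1) ≤ p (N + 2) := le_of_lt (hmono N)
      rw [← Finset.sum_Ico_consecutive _ hle1 hle2, ih]
      have hchunk : (∑ m ∈ Finset.Ico (p (N+1)) (p (N+2)),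
          (-1 : ℝ) ^ (Nat.primeCounting m) / ((m : ℝ) * Real.log m))
          = (-1 : ℝ) ^ (N+1) * s (N+1) := by
        rw [hs_def]
        simp only []
        rw [Finset.mul_sum]
        apply Finset.sum_congr rfl
        intro m hm
        rcases Finset.mem_Ico.mp hm with ⟨hm1, hm2⟩
        rw [hpi N m hm1 hm2]
        ring
      rw [hchunk]
      have : C (N + 1) = C N + (-1 : ℝ) ^ (N+1) * s (N+1) := by
        simp only [hC_def]
        exact Finset.sum_Icc_succ_top (a := 1) (b := N) (by omega) _
      rw [this]
  -- Step IV : C converges → B converges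
  have stepIV : ∀ L : ℝ, Filter.Tendsto C atTop (nhds L) → Filter.Tendsto B atTop (nhds L) := by
    intro L hC
    rw [Metric.tendsto_atTop] at hC ⊢
    intro ε hε
    obtain ⟨N₁, hN₁⟩ := hC (ε/3) (by linarith)
    obtain ⟨M₀, hM₀⟩ := Filter.eventually_atTop.mp
      (Filter.tendsto_atTop.mp Nat.tendsto_primeCounting (N₁ + 1))
    refine ⟨max M₀ 2, fun M hM => ?_⟩
    have hM2 : 2 ≤ M := le_trans (le_max_right _ _) hM
    obtain ⟨k, hk⟩ : ∃ k, Nat.primeCounting M = k + 1 := by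
      have := hM₀ M (le_trans (le_max_left _ _) hM)
      exact ⟨Nat.primeCounting M - 1, by omega⟩
    have hn1 : N₁ ≤ k := by
      have := hM₀ M (le_trans (le_max_left _ _) hM)
      omega
    have hcount : Nat.count Nat.Prime (M + 1) = k + 1 := hk
    have hbl : p (k + 1) ≤ M := by
      have h' : Nat.nth Nat.Prime k < M + 1 :=
        (Nat.lt_nth_iff_count_lt (p := Nat.Prime) Nat.infinite_setOf_prime).mp (by omega)
      rw [hp]; omega
    have hbr : M < p (k + 2) := by
      have h' : M + 1 ≤ Nat.nth Nat.Prime (k + 1) :=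
        (Nat.count_le_iff_le_nth (p := Nat.Prime) Nat.infinite_setOf_prime).mp (by omega)
      have h'' : p (k + 2) = Nat.nth Nat.Prime (k + 1) := hp (k + 1)
      omega
    set R : ℝ := ∑ m ∈ Finset.Ico (p (k+1)) (M+1), 1 / ((m : ℝ) * Real.log m) with hR_def
    have hR0 : 0 ≤ R := Finset.sum_nonneg fun m _ => hterm_nn m
    have hRs : R ≤ s (k + 1) := by
      rw [hs_def, hR_def]
      apply Finset.sum_le_sum_of_subset_of_nonneg
      · exact Finset.Ico_subset_Ico le_rfl (by have hrfl : p (k+1+1) = p (k+2) := rfl; omega)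
      · intro m _ _; exact hterm_nn m
    have hBM : B M = C k + (-1:ℝ)^(k+1) * R := by
      have hIcc : Finset.Icc 2 M = Finset.Ico 2 (M+1) := (Finset.Ico_add_one_right_eq_Icc 2 M).symm
      have hle1 : 2 ≤ p (k + 1) := hp2 k
      have hle2 : p (k + 1) ≤ M + 1 := by omega
      simp only [hB_def]
      rw [hIcc, ← Finset.sum_Ico_consecutive _ hle1 hle2, stepIII k]
      congr 1
      rw [hR_def, Finset.mul_sum]
      apply Finset.sum_congr rfl
      intro m hm
      rcases Finset.mem_Ico.mp hm with ⟨hm1, hm2⟩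
      rw [hpi k m hm1 (by omega)]
      ring
    have hCk1 : C (k+1) = C k + (-1:ℝ)^(k+1) * s (k+1) := by
      simp only [hC_def]
      exact Finset.sum_Icc_succ_top (a := 1) (b := k) (by omega) _
    have habs : ∀ x : ℝ, 0 ≤ x → |(-1:ℝ)^(k+1) * x| = x := fun x hx => by
      rw [abs_mul, abs_pow, abs_neg, abs_one, one_pow, one_mul, abs_of_nonneg hx]
    have d1 : |C k - L| < ε/3 := by
      have := hN₁ k hn1; rwa [Real.dist_eq] at this
    have d2 : |C (k+1) - L| < ε/3 := by
      have := hN₁ (k+1) (by omega); rwa [Real.dist_eq] at this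
    rw [Real.dist_eq]
    have est1 : |B M - L| ≤ |C k - L| + R := by
      rw [hBM]
      calc |C k + (-1:ℝ)^(k+1) * R - L| = |(C k - L) + (-1:ℝ)^(k+1) * R| := by ring_nf
        _ ≤ |C k - L| + |(-1:ℝ)^(k+1) * R| := abs_add_le _ _
        _ = |C k - L| + R := by rw [habs R hR0]
    have est2 : s (k+1) ≤ |C (k+1) - L| + |C k - L| := by
      have : s (k+1) = |C (k+1) - C k| := by
        rw [hCk1]
        rw [show C k + (-1:ℝ)^(k+1) * s (k+1) - C k = (-1:ℝ)^(k+1) * s (k+1) by ring]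
        rw [habs _ (hs_nn (k+1))]
      rw [this]
      calc |C (k+1) - C k| = |(C (k+1) - L) - (C k - L)| := by ring_nf
        _ ≤ |C (k+1) - L| + |C k - L| := abs_sub _ _
    linarith
  -- Step V : B converges → C converges
  have stepV : ∀ L : ℝ, Filter.Tendsto B atTop (nhds L) →
      Filter.Tendsto C atTop (nhds L) := by
    intro L hB
    have hCB : ∀ N, C N = B (p (N+1) - 1) := by
      intro N
      rw [← stepIII N]
      simp only [hB_def]
      have h' : Finset.Icc 2 (p (N+1) - 1) = Finset.Ico 2 (p (N+1)) := by
        rw [← Finset.Ico_add_one_right_eq_Icc]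
        congr 1
        have := hp2 N
        omega
      rw [h']
    have h1 : Filter.Tendsto (fun N : ℕ => p (N+1)) atTop atTop := by
      apply tendsto_atTop_mono (fun N => ?_) tendsto_id
      rw [hp]
      exact Nat.le_nth (fun hf => (Nat.infinite_setOf_prime hf).elim)
    have h2 : Filter.Tendsto (fun N : ℕ => p (N+1) - 1) atTop atTop :=
      (tendsto_sub_atTop_nat 1).comp h1
    exact (hB.comp h2).congr (fun N => (hCB N).symm)
  -- Step VI : A converges ↔ (A N + A (N+1)) converges
  have hAstep : ∀ N : ℕ, A (N + 1) = A N + (-1 : ℝ) ^ (N+1) * (N+1) / (p (N+1) : ℝ) := by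
    intro N
    simp only [hA_def]
    exact_mod_cast Finset.sum_Icc_succ_top (a := 1) (b := N) (by omega)
      (fun n => (-1 : ℝ) ^ n * n / (p n : ℝ))
  have stepVIf : ∀ L : ℝ, Filter.Tendsto A atTop (nhds L) →
      Filter.Tendsto (fun N => A N + A (N + 1)) atTop (nhds (2 * L)) := by
    intro L hA
    have h1 : Filter.Tendsto (fun N => A (N+1)) atTop (nhds L) :=
      (tendsto_add_atTop_iff_nat 1).mpr hA
    have := hA.add h1
    rwa [show L + L = 2 * L by ring] at this
  have stepVIb : ∀ S : ℝ, Filter.Tendsto (fun N => A N + A (N + 1)) atTop (nhds S) →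
      Filter.Tendsto A atTop (nhds (S / 2)) := by
    intro S hF
    have hle : ∀ m : ℕ, m ≤ Nat.nth Nat.Prime m :=
      fun m => Nat.le_nth (fun hf => (Nat.infinite_setOf_prime hf).elim)
    have hnthtop : Filter.Tendsto (fun N : ℕ => (Nat.nth Nat.Prime N : ℝ)) atTop atTop :=
      tendsto_natCast_atTop_atTop.comp (tendsto_atTop_mono hle tendsto_id)
    have hinv : Filter.Tendsto (fun N : ℕ => ((Nat.nth Nat.Prime N : ℝ))⁻¹) atTop (nhds 0) :=
      hnthtop.inv_tendsto_atTop
    have hzero : Filter.Tendsto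
        (fun N : ℕ => (N:ℝ)/(Nat.nth Nat.Prime N : ℝ) + ((Nat.nth Nat.Prime N : ℝ))⁻¹)
        atTop (nhds 0) := by
      simpa using aux_tendsto_div_nth.add hinv
    have hd : Filter.Tendsto (fun N : ℕ => (-1:ℝ)^(N+1) * (N+1) / (p (N+1) : ℝ)) atTop
        (nhds 0) := by
      apply squeeze_zero_norm (fun N => ?_) hzero
      rw [hp N]
      rw [Real.norm_eq_abs, abs_div, abs_mul, abs_pow, abs_neg, abs_one, one_pow, one_mul]
      rw [abs_of_nonneg (by positivity : (0:ℝ) ≤ (N:ℝ)+1),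
        abs_of_nonneg (Nat.cast_nonneg _), _root_.add_div]
      rw [one_div]
    have hA1 : Filter.Tendsto (fun N => A (N+1)) atTop (nhds (S/2)) := by
      have h2 := (hF.add hd).div_const 2
      rw [add_zero] at h2
      apply h2.congr
      intro N
      rw [hAstep N]
      ring
    exact (tendsto_add_atTop_iff_nat 1).mp hA1
  -- assemble
  obtain ⟨LE, hE⟩ := h2
  obtain ⟨K, hK⟩ := stepI
  constructor
  · rintro ⟨L, hL⟩
    have hF := stepVIf L hL
    have hD : Filter.Tendsto D atTop (nhds (2 * L + 1 / (p 1 : ℝ) + LE)) := by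
      have : Filter.Tendsto (fun N => A N + A (N + 1) + 1 / (p 1 : ℝ) + E N) atTop
          (nhds (2 * L + 1 / (p 1 : ℝ) + LE)) := ((hF.add_const _).add hE)
      exact this.congr (fun N => (stepII N).symm)
    have hC : Filter.Tendsto C atTop (nhds (K + (2 * L + 1 / (p 1 : ℝ) + LE))) := by
      have := hK.add hD
      simpa [sub_add_cancel] using this.congr (fun N => by ring)
    exact ⟨_, stepIV _ hC⟩
  · rintro ⟨L, hL⟩
    have hC := stepV L hL
    have hD : Filter.Tendsto D atTop (nhds (L - K)) := by
      have := hC.sub hK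
      exact this.congr (fun N => by ring)
    have hF : Filter.Tendsto (fun N => A N + A (N + 1)) atTop
        (nhds (L - K - 1 / (p 1 : ℝ) - LE)) := by
      have := (hD.sub_const (1 / (p 1 : ℝ))).sub hE
      exact this.congr (fun N => by rw [stepII N]; ring)
    exact ⟨_, stepVIb _ hF⟩
end

section
/- Let S be a finite random subset of {1,...,H} with H ≤ q for a prime q, let a be uniform in Z/qZ independent of S, and S' = {h ∈ S : h ≢ a mod q}. Then |E[(-1)^{|S'|}]| ≤ (1 − 2·E|S|/q) · |E[(-1)^{|S|}]| + (2/q)·E| |S| − E|S| |, provided E|S| ≤ q/2. -/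
open MeasureTheory ProbabilityTheory Classical

instance : MeasurableSpace (Finset ℕ) := ⊤

/-- One-variable decomposition of integral of a function of `S`. -/
lemma integral_decomp_one {Ω : Type*} [MeasurableSpace Ω] (μ : Measure Ω)
    [IsProbabilityMeasure μ] (H : ℕ)
    (S : Ω → Finset ℕ) (hS : ∀ ω, S ω ⊆ Finset.Icc 1 H) (hSmeas : Measurable S)
    (g : Finset ℕ → ℝ) :
    ∫ ω, g (S ω) ∂μ =
      ∑ s ∈ (Finset.Icc 1 H).powerset, (μ {ω | S ω = s}).toReal * g s := by
  have hfun : ∀ ω, g (S ω) =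
      ∑ s ∈ (Finset.Icc 1 H).powerset,
        Set.indicator {ω | S ω = s} (fun _ => g s) ω := by
    intro ω
    rw [Finset.sum_eq_single (S ω)]
    · simp [Set.indicator_apply]
    · intro s _ hne
      simp only [Set.indicator_apply, Set.mem_setOf_eq, ite_eq_right_iff]
      exact fun h => absurd h.symm hne
    · intro h
      exact absurd (Finset.mem_powerset.mpr (hS ω)) h
  have hmeas : ∀ s : Finset ℕ, MeasurableSet {ω | S ω = s} := by
    intro s
    have : {ω | S ω = s} = S ⁻¹' {s} := rfl
    rw [this]
    exact hSmeas (show MeasurableSet {s} from MeasurableSpace.measurableSet_top)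
  calc ∫ ω, g (S ω) ∂μ
      = ∫ ω, ∑ s ∈ (Finset.Icc 1 H).powerset,
          Set.indicator {ω | S ω = s} (fun _ => g s) ω ∂μ := by
        simp_rw [← hfun]
    _ = ∑ s ∈ (Finset.Icc 1 H).powerset,
          ∫ ω, Set.indicator {ω | S ω = s} (fun _ => g s) ω ∂μ :=
        integral_finset_sum _
          (fun s _ => (integrable_const (g s)).indicator (hmeas s))
    _ = _ := by
        refine Finset.sum_congr rfl fun s _ => ?_
        rw [integral_indicator_const _ (hmeas s), smul_eq_mul]
        rfl

/-- Two-variable decomposition of integral of a function of `S` and `a`. -/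
lemma integral_decomp_two {Ω : Type*} [MeasurableSpace Ω] (μ : Measure Ω)
    [IsProbabilityMeasure μ] (H q : ℕ)
    (S : Ω → Finset ℕ) (hS : ∀ ω, S ω ⊆ Finset.Icc 1 H) (hSmeas : Measurable S)
    (a : Ω → ℕ) (hameas : Measurable a) (harange : ∀ ω, a ω < q)
    (f : Finset ℕ → ℕ → ℝ) :
    ∫ ω, f (S ω) (a ω) ∂μ =
      ∑ s ∈ (Finset.Icc 1 H).powerset, ∑ r ∈ Finset.range q,
        (μ {ω | S ω = s ∧ a ω = r}).toReal * f s r := by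
  have hmeas : ∀ (s : Finset ℕ) (r : ℕ), MeasurableSet {ω | S ω = s ∧ a ω = r} := by
    intro s r
    have : {ω | S ω = s ∧ a ω = r} = S ⁻¹' {s} ∩ a ⁻¹' {r} := by
      ext ω; simp [Set.mem_setOf_eq]
    rw [this]
    exact (hSmeas MeasurableSpace.measurableSet_top).inter
      (hameas (measurableSet_singleton r))
  have hfun : ∀ ω, f (S ω) (a ω) =
      ∑ s ∈ (Finset.Icc 1 H).powerset, ∑ r ∈ Finset.range q,
        Set.indicator {ω | S ω = s ∧ a ω = r} (fun _ => f s r) ω := by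
    intro ω
    rw [Finset.sum_eq_single (S ω)]
    · rw [Finset.sum_eq_single (a ω)]
      · simp [Set.indicator_apply]
      · intro r _ hne
        simp only [Set.indicator_apply, Set.mem_setOf_eq, ite_eq_right_iff]
        exact fun h => absurd h.2.symm hne
      · intro h
        exact absurd (Finset.mem_range.mpr (harange ω)) h
    · intro s _ hne
      refine Finset.sum_eq_zero fun r _ => ?_
      simp only [Set.indicator_apply, Set.mem_setOf_eq, ite_eq_right_iff]
      exact fun h => absurd h.1.symm hne
    · intro h
      exact absurd (Finset.mem_powerset.mpr (hS ω)) h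
  calc ∫ ω, f (S ω) (a ω) ∂μ
      = ∫ ω, ∑ s ∈ (Finset.Icc 1 H).powerset, ∑ r ∈ Finset.range q,
          Set.indicator {ω | S ω = s ∧ a ω = r} (fun _ => f s r) ω ∂μ := by
        simp_rw [← hfun]
    _ = ∑ s ∈ (Finset.Icc 1 H).powerset, ∑ r ∈ Finset.range q,
          ∫ ω, Set.indicator {ω | S ω = s ∧ a ω = r} (fun _ => f s r) ω ∂μ := by
        have hint : ∀ (s : Finset ℕ) (r : ℕ),
            Integrable (Set.indicator {ω | S ω = s ∧ a ω = r} (fun _ => f s r)) μ :=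
          fun s r => Integrable.indicator (integrable_const (f s r)) (hmeas s r)
        rw [integral_finset_sum _
          (fun s _ => integrable_finset_sum _ (fun r _ => hint s r))]
        exact Finset.sum_congr rfl fun s _ =>
          integral_finset_sum _ (fun r _ => hint s r)
    _ = _ := by
        refine Finset.sum_congr rfl fun s _ => Finset.sum_congr rfl fun r _ => ?_
        rw [integral_indicator_const _ (hmeas s r), smul_eq_mul]
        rfl

/-- Key combinatorial identity. -/
lemma sift_sum (H q : ℕ) (hq : 0 < q) (hHq : H ≤ q) (s : Finset ℕ)
    (hs : s ⊆ Finset.Icc 1 H) :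
    ∑ r ∈ Finset.range q, (-1 : ℝ) ^ ((s.filter (fun h => h % q ≠ r)).card) =
      ((q : ℝ) - 2 * s.card) * (-1 : ℝ) ^ s.card := by
  set t := s.image (· % q) with ht
  have hkey : ∀ h ∈ s, h % q = if h = q then 0 else h := by
    intro h hh
    have h1 : 1 ≤ h ∧ h ≤ H := Finset.mem_Icc.mp (hs hh)
    by_cases hcase : h = q
    · simp [hcase, Nat.mod_self]
    · have : h < q := lt_of_le_of_ne (le_trans h1.2 hHq) hcase
      simp [hcase, Nat.mod_eq_of_lt this]
  have hinj : Set.InjOn (· % q) s := by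
    intro h1 hm1 h2 hm2 he
    have e1 := hkey h1 hm1
    have e2 := hkey h2 hm2
    have hb1 := Finset.mem_Icc.mp (hs hm1)
    have hb2 := Finset.mem_Icc.mp (hs hm2)
    simp only at he
    rw [e1, e2] at he
    split_ifs at he <;> omega
  have htcard : t.card = s.card := Finset.card_image_of_injOn hinj
  have htsub : t ⊆ Finset.range q := by
    intro r hr
    obtain ⟨h, _, rfl⟩ := Finset.mem_image.mp hr
    exact Finset.mem_range.mpr (Nat.mod_lt _ hq)
  have hterm : ∀ r ∈ Finset.range q,
      (-1 : ℝ) ^ ((s.filter (fun h => h % q ≠ r)).card) =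
        (-1 : ℝ) ^ s.card - (if r ∈ t then 2 * (-1 : ℝ) ^ s.card else 0) := by
    intro r _
    by_cases hr : r ∈ t
    · obtain ⟨h0, hh0, hh0r⟩ := Finset.mem_image.mp hr
      have hfe : s.filter (fun h => h % q ≠ r) = s.erase h0 := by
        ext h
        simp only [Finset.mem_filter, Finset.mem_erase]
        constructor
        · rintro ⟨hh, hne⟩
          refine ⟨fun heq => hne (heq ▸ hh0r), hh⟩
        · rintro ⟨hne, hh⟩
          refine ⟨hh, fun heq => hne (hinj hh hh0 (heq.trans hh0r.symm))⟩
      obtain ⟨n, hn⟩ : ∃ n, s.card = n + 1 :=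
        ⟨s.card - 1, (Nat.succ_pred_eq_of_pos (Finset.card_pos.mpr ⟨h0, hh0⟩)).symm⟩
      rw [hfe, Finset.card_erase_of_mem hh0, if_pos hr, hn]
      simp only [Nat.add_sub_cancel, pow_succ]
      ring
    · have : s.filter (fun h => h % q ≠ r) = s := by
        apply Finset.filter_true_of_mem
        intro h hh heq
        exact hr (Finset.mem_image.mpr ⟨h, hh, heq⟩)
      rw [this]
      simp [hr]
  rw [Finset.sum_congr rfl hterm, Finset.sum_sub_distrib, Finset.sum_const,
    Finset.card_range, ← Finset.sum_filter, Finset.filter_mem_eq_inter,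
    Finset.inter_eq_right.mpr htsub, Finset.sum_const, htcard]
  ring

theorem sift_parity_bias_contraction
    (H q : ℕ) (hq : q.Prime) (hHq : H ≤ q)
    (Ω : Type*) [MeasurableSpace Ω] (μ : Measure Ω) [IsProbabilityMeasure μ]
    (S : Ω → Finset ℕ) (hS : ∀ ω, S ω ⊆ Finset.Icc 1 H) (hSmeas : Measurable S)
    (a : Ω → ℕ) (hameas : Measurable a) (harange : ∀ ω, a ω < q)
    (hunif : ∀ r < q, μ {ω | a ω = r} = 1 / (q : ENNReal))
    (hindep : IndepFun S a μ)
    (hmean : (∫ ω, ((S ω).card : ℝ) ∂μ) ≤ (q : ℝ) / 2) :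
    |∫ ω, (-1 : ℝ) ^ (((S ω).filter (fun h => h % q ≠ a ω)).card) ∂μ| ≤
      (1 - 2 * (∫ ω, ((S ω).card : ℝ) ∂μ) / (q : ℝ)) *
        |∫ ω, (-1 : ℝ) ^ ((S ω).card) ∂μ| +
      (2 / (q : ℝ)) * ∫ ω, |((S ω).card : ℝ) - ∫ ω', ((S ω').card : ℝ) ∂μ| ∂μ := by
  have hq0 : 0 < q := hq.pos
  have hq0R : (0 : ℝ) < q := by exact_mod_cast hq0
  set P := (Finset.Icc 1 H).powerset with hP
  set m := ∫ ω, ((S ω).card : ℝ) ∂μ with hm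
  set p : Finset ℕ → ℝ := fun s => (μ {ω | S ω = s}).toReal with hp
  have hpnonneg : ∀ s, 0 ≤ p s := fun s => ENNReal.toReal_nonneg
  -- joint law
  have hjoint : ∀ s : Finset ℕ, ∀ r < q,
      (μ {ω | S ω = s ∧ a ω = r}).toReal = p s * (1 / (q : ℝ)) := by
    intro s r hr
    have hset : {ω | S ω = s ∧ a ω = r} = S ⁻¹' {s} ∩ a ⁻¹' {r} := by
      ext ω; simp [Set.mem_setOf_eq]
    have hset2 : {ω | a ω = r} = a ⁻¹' {r} := rfl
    have hset3 : {ω | S ω = s} = S ⁻¹' {s} := rfl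
    rw [hset, hindep.measure_inter_preimage_eq_mul _ _
      MeasurableSpace.measurableSet_top (measurableSet_singleton r),
      ← hset2, hunif r hr, ENNReal.toReal_mul]
    congr 1
    rw [one_div, ENNReal.toReal_inv]
    simp
  -- the three one-variable integrals
  have hI1 : m = ∑ s ∈ P, p s * (s.card : ℝ) :=
    integral_decomp_one μ H S hS hSmeas (fun s => (s.card : ℝ))
  have hI2 : (∫ ω, (-1 : ℝ) ^ ((S ω).card) ∂μ) = ∑ s ∈ P, p s * (-1 : ℝ) ^ s.card :=
    integral_decomp_one μ H S hS hSmeas (fun s => (-1 : ℝ) ^ s.card)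
  have hI3 : (∫ ω, |((S ω).card : ℝ) - m| ∂μ) = ∑ s ∈ P, p s * |(s.card : ℝ) - m| :=
    integral_decomp_one μ H S hS hSmeas (fun s => |(s.card : ℝ) - m|)
  -- the sifted integral
  have hI0 : (∫ ω, (-1 : ℝ) ^ (((S ω).filter (fun h => h % q ≠ a ω)).card) ∂μ) =
      ∑ s ∈ P, p s * ((1 - 2 * (s.card : ℝ) / q) * (-1 : ℝ) ^ s.card) := by
    rw [integral_decomp_two μ H q S hS hSmeas a hameas harange
      (fun s r => (-1 : ℝ) ^ ((s.filter (fun h => h % q ≠ r)).card))]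
    refine Finset.sum_congr rfl fun s hsP => ?_
    have hssub : s ⊆ Finset.Icc 1 H := Finset.mem_powerset.mp hsP
    calc ∑ r ∈ Finset.range q, (μ {ω | S ω = s ∧ a ω = r}).toReal *
            (-1 : ℝ) ^ ((s.filter (fun h => h % q ≠ r)).card)
        = ∑ r ∈ Finset.range q, p s * (1 / (q : ℝ)) *
            (-1 : ℝ) ^ ((s.filter (fun h => h % q ≠ r)).card) := by
          refine Finset.sum_congr rfl fun r hr => ?_
          rw [hjoint s r (Finset.mem_range.mp hr)]
      _ = p s * (1 / (q : ℝ)) *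
            ∑ r ∈ Finset.range q, (-1 : ℝ) ^ ((s.filter (fun h => h % q ≠ r)).card) := by
          rw [Finset.mul_sum]
      _ = p s * (1 / (q : ℝ)) * (((q : ℝ) - 2 * s.card) * (-1 : ℝ) ^ s.card) := by
          rw [sift_sum H q hq0 hHq s hssub]
      _ = p s * ((1 - 2 * (s.card : ℝ) / q) * (-1 : ℝ) ^ s.card) := by
          field_simp
          try ring
  -- split
  have hsplit : ∑ s ∈ P, p s * ((1 - 2 * (s.card : ℝ) / q) * (-1 : ℝ) ^ s.card) =
      (1 - 2 * m / q) * (∑ s ∈ P, p s * (-1 : ℝ) ^ s.card) +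
      (2 / q) * ∑ s ∈ P, p s * ((m - (s.card : ℝ)) * (-1 : ℝ) ^ s.card) := by
    rw [Finset.mul_sum, Finset.mul_sum, ← Finset.sum_add_distrib]
    refine Finset.sum_congr rfl fun s _ => ?_
    field_simp
    try ring
  rw [hI0, hsplit, hI2, hI3]
  have hc1 : 0 ≤ 1 - 2 * m / q := by
    have : 2 * m / q ≤ 1 := by
      rw [div_le_one hq0R]
      linarith
    linarith
  refine (abs_add_le _ _).trans (add_le_add ?_ ?_)
  · rw [abs_mul, abs_of_nonneg hc1]
  · rw [abs_mul, abs_of_nonneg (by positivity : (0:ℝ) ≤ 2 / (q:ℝ))]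
    refine mul_le_mul_of_nonneg_left ?_ (by positivity)
    refine (Finset.abs_sum_le_sum_abs _ _).trans (Finset.sum_le_sum fun s _ => ?_)
    rw [abs_mul, abs_mul, abs_pow, abs_neg, abs_one, one_pow, mul_one,
      abs_of_nonneg (hpnonneg s), abs_sub_comm]
end
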